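/- Let Q ⊂ ℝ² be the open square of side length √(2π) centered at a point a ∈ ℝ², let w : ℝ² → ℝ be smooth, and define h(x) = log|x − a| + w(x) for x ≠ a. Then there exist constants C > 0 and b₀ ∈ (0, π/2) such that for every b ∈ (0, b₀): ∫_{Q ∖ B(a,√b)} |∇h(x)|² dx ≤ π·|log b| + C, and ∫_{B(a,√b)} |x − a|²·|∇h(x)|² dx ≤ C·b. -/

import Mathlib

open MeasureTheory Set

/-- The open square of side length `√(2π)` centered at `a ∈ ℝ²`. -/
def centeredSquare (a : EuclideanSpace ℝ (Fin 2)) : Set (EuclideanSpace ℝ (Fin 2)) :=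
  {x | |x 0 - a 0| < Real.sqrt (2 * Real.pi) / 2 ∧
       |x 1 - a 1| < Real.sqrt (2 * Real.pi) / 2}

/-- The gradient of `h(x) = log|x - a| + w(x)`, namely
`∇h(x) = (x - a)/|x - a|² + ∇w(x)`. -/
noncomputable def gradLogPlus (a : EuclideanSpace ℝ (Fin 2))
    (w : EuclideanSpace ℝ (Fin 2) → ℝ) (x : EuclideanSpace ℝ (Fin 2)) :
    EuclideanSpace ℝ (Fin 2) :=
  (‖x - a‖ ^ 2)⁻¹ • (x - a) + gradient w x

lemma vol2_ball (a : EuclideanSpace ℝ (Fin 2)) (r : ℝ) (hr : 0 ≤ r) :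
    (volume (Metric.ball a r)).toReal = Real.pi * r ^ 2 := by
  rw [EuclideanSpace.volume_ball]
  simp only [Fintype.card_fin]
  rw [show ((2:ℕ):ℝ)/2 + 1 = 2 by norm_num, Real.Gamma_two]
  rw [ENNReal.toReal_mul, ENNReal.toReal_pow, ENNReal.toReal_ofReal hr,
    ENNReal.toReal_ofReal (by positivity), div_one, Real.sq_sqrt Real.pi_nonneg]
  ring

lemma annulus_integral (a : EuclideanSpace ℝ (Fin 2)) (g : ℝ → ℝ) (s : ℝ) (hs : 0 < s) :
    ∫ x in Metric.ball a 2 \ Metric.ball a s, g ‖x - a‖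
      = 2 * Real.pi * ∫ y in Ico s 2, y * g y := by
  set A := Metric.ball a 2 \ Metric.ball a s with hA
  have hAmeas : MeasurableSet A := measurableSet_ball.diff measurableSet_ball
  have hmem : ∀ x : EuclideanSpace ℝ (Fin 2), x ∈ A ↔ ‖x - a‖ ∈ Ico s 2 := by
    intro x
    simp only [hA, mem_diff, Metric.mem_ball, dist_eq_norm, mem_Ico, not_lt]
    tauto
  have h1 : ∀ x : EuclideanSpace ℝ (Fin 2),
      A.indicator (fun x => g ‖x - a‖) x = (Ico s 2).indicator g ‖x - a‖ := by
    intro x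
    by_cases hx : x ∈ A
    · rw [indicator_of_mem hx, indicator_of_mem ((hmem x).1 hx)]
    · rw [indicator_of_notMem hx, indicator_of_notMem (fun h => hx ((hmem x).2 h))]
  rw [← integral_indicator hAmeas]
  simp_rw [h1]
  rw [integral_sub_right_eq_self (fun y => (Ico s 2).indicator g ‖y‖) a]
  have hrad := MeasureTheory.integral_fun_norm_addHaar
    (volume : Measure (EuclideanSpace ℝ (Fin 2))) ((Ico s 2).indicator g)
  rw [finrank_euclideanSpace_fin] at hrad
  rw [hrad]
  have hball : (volume (Metric.ball (0 : EuclideanSpace ℝ (Fin 2)) 1)).toReal = Real.pi := by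
    rw [vol2_ball _ _ zero_le_one]; ring
  rw [show volume.real (Metric.ball (0 : EuclideanSpace ℝ (Fin 2)) 1) = Real.pi from hball]
  have h2 : ∀ y : ℝ, y ^ (2 - 1) • (Ico s 2).indicator g y
      = (Ico s 2).indicator (fun y => y * g y) y := by
    intro y
    by_cases hy : y ∈ Ico s 2
    · rw [indicator_of_mem hy, indicator_of_mem hy]; simp
    · rw [indicator_of_notMem hy, indicator_of_notMem hy, smul_zero]
  simp_rw [h2]
  rw [setIntegral_indicator measurableSet_Ico]
  rw [inter_eq_self_of_subset_right
    (fun y (hy : y ∈ Ico s 2) => mem_Ioi.2 (lt_of_lt_of_le hs hy.1))]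
  rw [nsmul_eq_mul, smul_eq_mul]
  ring

lemma one_dim (M s : ℝ) (hs : 0 < s) (hs2 : s < 2) :
    ∫ y in Ico s 2, y * (y⁻¹ + M)^2
      = (Real.log 2 - Real.log s) + 2*M*(2-s) + M^2*(4 - s^2)/2 := by
  rw [MeasureTheory.restrict_Ico_eq_restrict_Ioc, ← intervalIntegral.integral_of_le hs2.le]
  have hcongr : ∀ y ∈ uIcc s 2, y * (y⁻¹ + M)^2 = y⁻¹ + (2*M + M^2*y) := by
    intro y hy
    rw [uIcc_of_le hs2.le] at hy
    have hy0 : 0 < y := lt_of_lt_of_le hs hy.1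
    field_simp
    ring
  rw [intervalIntegral.integral_congr hcongr]
  have hne : ∀ y : ℝ, y ∈ uIcc s 2 → y ≠ 0 := by
    intro y hy
    rw [uIcc_of_le hs2.le] at hy
    exact (lt_of_lt_of_le hs hy.1).ne'
  have hi1 : IntervalIntegrable (fun y : ℝ => y⁻¹) volume s 2 :=
    intervalIntegral.intervalIntegrable_inv hne continuousOn_id
  have hi2 : IntervalIntegrable (fun y : ℝ => 2*M + M^2*y) volume s 2 :=
    (continuous_const.add (continuous_const.mul continuous_id')).intervalIntegrable s 2
  rw [intervalIntegral.integral_add hi1 hi2]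
  rw [integral_inv_of_pos hs two_pos]
  rw [intervalIntegral.integral_add (f := fun _ => 2*M) (g := fun x => M^2*x) (intervalIntegrable_const)
    ((continuous_const.mul continuous_id').intervalIntegrable s 2)]
  rw [intervalIntegral.integral_const, intervalIntegral.integral_const_mul, integral_id]
  rw [Real.log_div two_ne_zero hs.ne', smul_eq_mul]
  ring

lemma square_subset (a : EuclideanSpace ℝ (Fin 2)) :
    centeredSquare a ⊆ Metric.ball a 2 := by
  rintro x ⟨h0, h1⟩
  rw [Metric.mem_ball, EuclideanSpace.dist_eq, Fin.sum_univ_two]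
  rw [Real.sqrt_lt' two_pos]
  have c0 : dist (x 0) (a 0) ^ 2 < (Real.sqrt (2*Real.pi)/2) ^ 2 := by
    rw [Real.dist_eq]
    exact pow_lt_pow_left₀ h0 (abs_nonneg _) two_ne_zero
  have c1 : dist (x 1) (a 1) ^ 2 < (Real.sqrt (2*Real.pi)/2) ^ 2 := by
    rw [Real.dist_eq]
    exact pow_lt_pow_left₀ h1 (abs_nonneg _) two_ne_zero
  have e : (Real.sqrt (2*Real.pi)/2) ^ 2 = Real.pi / 2 := by
    rw [div_pow, Real.sq_sqrt (by positivity)]; ring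
  rw [e] at c0 c1
  have := Real.pi_lt_d2
  norm_num
  linarith

lemma square_open (a : EuclideanSpace ℝ (Fin 2)) : IsOpen (centeredSquare a) := by
  have hc : ∀ i, Continuous fun x : EuclideanSpace ℝ (Fin 2) => x i :=
    fun i => (EuclideanSpace.proj i : EuclideanSpace ℝ (Fin 2) →L[ℝ] ℝ).continuous
  have : centeredSquare a =
      {x : EuclideanSpace ℝ (Fin 2) | |x 0 - a 0| < Real.sqrt (2 * Real.pi) / 2} ∩
      {x | |x 1 - a 1| < Real.sqrt (2 * Real.pi) / 2} := rfl
  rw [this]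
  exact (isOpen_lt (((hc 0).sub continuous_const).abs) continuous_const).inter
    (isOpen_lt (((hc 1).sub continuous_const).abs) continuous_const)

set_option maxHeartbeats 2000000 in
/-- For the function `h(x) = log|x - a| + w(x)` with `w` smooth,
there exist `C > 0` and `b₀ ∈ (0, π/2)` such that for every `b ∈ (0, b₀)`:
`∫_{Q ∖ B(a,√b)} |∇h|² ≤ π|log b| + C` and
`∫_{B(a,√b)} |x - a|²|∇h|² ≤ C·b`, where `Q` is the open square of side `√(2π)`
centered at `a`. -/
theorem log_gradient_estimates (a : EuclideanSpace ℝ (Fin 2))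
    (w : EuclideanSpace ℝ (Fin 2) → ℝ) (hw : ContDiff ℝ (⊤ : ℕ∞) w) :
    ∃ C > (0 : ℝ), ∃ b₀ ∈ Set.Ioo (0 : ℝ) (Real.pi / 2), ∀ b ∈ Set.Ioo 0 b₀,
      (∫ x in centeredSquare a \ Metric.ball a (Real.sqrt b),
          ‖gradLogPlus a w x‖ ^ 2) ≤ Real.pi * |Real.log b| + C ∧
      (∫ x in Metric.ball a (Real.sqrt b),
          ‖x - a‖ ^ 2 * ‖gradLogPlus a w x‖ ^ 2) ≤ C * b := by
  classical
  have hgc : Continuous (gradient w) := by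
    have h1 : Continuous (fderiv ℝ w) := hw.continuous_fderiv (by simp)
    exact ((InnerProductSpace.toDual ℝ (EuclideanSpace ℝ (Fin 2))).symm.continuous).comp h1
  obtain ⟨M0, hM0⟩ := (isCompact_closedBall a 2).exists_bound_of_continuousOn hgc.continuousOn
  set M := max M0 0 with hMdef
  have hM : 0 ≤ M := le_max_right _ _
  have hMb : ∀ x ∈ Metric.closedBall a 2, ‖gradient w x‖ ≤ M :=
    fun x hx => (hM0 x hx).trans (le_max_left _ _)
  have hπ : (0:ℝ) < Real.pi := Real.pi_pos
  have hlog2 : 0 ≤ Real.log 2 := Real.log_nonneg one_le_two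
  set C : ℝ := 2*Real.pi*Real.log 2 + 8*Real.pi*M + 4*Real.pi*M^2
      + Real.pi*(1+M)^2 + 1 with hCdef
  have hCpos : 0 < C := by
    nlinarith [mul_nonneg hπ.le hlog2, mul_nonneg hπ.le hM,
      mul_nonneg hπ.le (sq_nonneg M), mul_nonneg hπ.le (sq_nonneg (1+M))]
  refine ⟨C, hCpos, 1, ⟨one_pos, by nlinarith [Real.pi_gt_three]⟩, ?_⟩
  rintro b ⟨hb0, hb1⟩
  set s := Real.sqrt b with hsdef
  have hs0 : 0 < s := Real.sqrt_pos.2 hb0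
  have hs1 : s < 1 := by
    rw [hsdef, show (1:ℝ) = Real.sqrt 1 by rw [Real.sqrt_one]]
    exact Real.sqrt_lt_sqrt hb0.le hb1
  have hs2 : s < 2 := hs1.trans one_lt_two
  have hsb : s^2 = b := Real.sq_sqrt hb0.le
  -- pointwise norm bound
  have key : ∀ x : EuclideanSpace ℝ (Fin 2), x ≠ a → x ∈ Metric.closedBall a 2 →
      ‖gradLogPlus a w x‖ ≤ ‖x - a‖⁻¹ + M := by
    intro x hxa hx2
    have h0 : (0:ℝ) < ‖x - a‖ := by
      rw [norm_pos_iff, sub_ne_zero]; exact hxa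
    have e1 : ‖(‖x - a‖^2)⁻¹ • (x - a)‖ = ‖x - a‖⁻¹ := by
      rw [norm_smul, Real.norm_eq_abs, abs_of_nonneg (by positivity), sq, mul_inv,
        mul_assoc, inv_mul_cancel₀ h0.ne', mul_one]
    calc ‖gradLogPlus a w x‖ ≤ ‖(‖x - a‖^2)⁻¹ • (x - a)‖ + ‖gradient w x‖ := norm_add_le _ _
      _ ≤ ‖x - a‖⁻¹ + M := by rw [e1]; exact add_le_add_right (hMb x hx2) _
  constructor
  · -- first estimate
    have hQs : centeredSquare a \ Metric.ball a s ⊆ Metric.ball a 2 \ Metric.ball a s :=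
      fun x hx => ⟨square_subset a hx.1, hx.2⟩
    set A := Metric.ball a 2 \ Metric.ball a s with hAdef
    have hAmeas : MeasurableSet A := measurableSet_ball.diff measurableSet_ball
    set G : EuclideanSpace ℝ (Fin 2) → ℝ := fun x => (‖x - a‖⁻¹ + M)^2 with hGdef
    have hGnn : ∀ x, 0 ≤ G x := fun x => sq_nonneg _
    have hGmeas : AEStronglyMeasurable G (volume : Measure (EuclideanSpace ℝ (Fin 2))) := by
      apply Measurable.aestronglyMeasurable
      measurability
    have hsnorm : ∀ x ∈ A, s ≤ ‖x - a‖ := by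
      intro x hx
      have h := hx.2
      rwa [Metric.mem_ball, dist_eq_norm, not_lt] at h
    have hfin : volume A ≠ ⊤ :=
      ((measure_mono diff_subset).trans_lt measure_ball_lt_top).ne
    have hbd : ∀ᵐ x ∂(volume.restrict A), ‖G x‖ ≤ (s⁻¹ + M)^2 := by
      rw [ae_restrict_iff' hAmeas]
      refine ae_of_all _ fun x hx => ?_
      have hsx : s ≤ ‖x - a‖ := hsnorm x hx
      rw [Real.norm_eq_abs, abs_of_nonneg (hGnn x)]
      refine pow_le_pow_left₀ (by positivity) (add_le_add_left ?_ M) 2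
      exact inv_anti₀ hs0 hsx
    have hGint : IntegrableOn G A := Measure.integrableOn_of_bounded hfin hGmeas hbd
    have hbound : ∀ x ∈ A, ‖gradLogPlus a w x‖^2 ≤ G x := by
      intro x hx
      have h0 : (0:ℝ) < ‖x - a‖ := lt_of_lt_of_le hs0 (hsnorm x hx)
      have hxa : x ≠ a := by
        intro h; rw [h, sub_self, norm_zero] at h0; exact lt_irrefl 0 h0
      exact pow_le_pow_left₀ (norm_nonneg _)
        (key x hxa (Metric.ball_subset_closedBall hx.1)) 2
    have hQmeas : MeasurableSet (centeredSquare a \ Metric.ball a s) :=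
      (square_open a).measurableSet.diff measurableSet_ball
    have step1 : (∫ x in centeredSquare a \ Metric.ball a s, ‖gradLogPlus a w x‖^2)
        ≤ ∫ x in centeredSquare a \ Metric.ball a s, G x :=
      integral_mono_of_nonneg (ae_of_all _ fun x => by positivity)
        (hGint.mono_set hQs)
        ((ae_restrict_iff' hQmeas).2 (ae_of_all _ fun x hx => hbound x (hQs hx)))
    have step2 : (∫ x in centeredSquare a \ Metric.ball a s, G x) ≤ ∫ x in A, G x :=
      setIntegral_mono_set hGint (ae_of_all _ hGnn) (HasSubset.Subset.eventuallyLE hQs)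
    have hcomp : ∫ x in A, G x = 2 * Real.pi * ∫ y in Ico s 2, y * (y⁻¹ + M)^2 :=
      annulus_integral a (fun r => (r⁻¹ + M)^2) s hs0
    rw [one_dim M s hs0 hs2] at hcomp
    have hlogs : Real.log s = Real.log b / 2 := Real.log_sqrt hb0.le
    have hlogb : |Real.log b| = - Real.log b := abs_of_neg (Real.log_neg hb0 hb1)
    have final : 2 * Real.pi * ((Real.log 2 - Real.log s) + 2*M*(2-s) + M^2*(4 - s^2)/2)
        ≤ Real.pi * |Real.log b| + C := by
      rw [hlogs, hlogb, hsb]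
      nlinarith [mul_nonneg (mul_nonneg hπ.le hM) hs0.le,
        mul_nonneg (mul_nonneg hπ.le (sq_nonneg M)) hb0.le,
        mul_nonneg hπ.le (sq_nonneg (1+M)), mul_nonneg hπ.le hlog2]
    calc (∫ x in centeredSquare a \ Metric.ball a s, ‖gradLogPlus a w x‖^2)
        ≤ ∫ x in centeredSquare a \ Metric.ball a s, G x := step1
      _ ≤ ∫ x in A, G x := step2
      _ = 2 * Real.pi * ((Real.log 2 - Real.log s) + 2*M*(2-s) + M^2*(4 - s^2)/2) := hcomp
      _ ≤ Real.pi * |Real.log b| + C := final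
  · -- second estimate
    have hK : ∀ x ∈ Metric.ball a s, ‖x - a‖^2 * ‖gradLogPlus a w x‖^2 ≤ (1+M)^2 := by
      intro x hx
      by_cases hxa : x = a
      · subst hxa
        simp only [sub_self, norm_zero]
        norm_num
        positivity
      · have hx1 : ‖x - a‖ < 1 := by
          rw [Metric.mem_ball, dist_eq_norm] at hx
          exact hx.trans hs1
        have h0 : (0:ℝ) < ‖x - a‖ := by rw [norm_pos_iff, sub_ne_zero]; exact hxa
        have hxcb : x ∈ Metric.closedBall a 2 := by
          rw [Metric.mem_closedBall, dist_eq_norm]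
          linarith
        have hk := key x hxa hxcb
        have h2 : ‖x - a‖ * ‖gradLogPlus a w x‖ ≤ 1 + ‖x - a‖ * M := by
          calc ‖x - a‖ * ‖gradLogPlus a w x‖ ≤ ‖x - a‖ * (‖x - a‖⁻¹ + M) :=
                mul_le_mul_of_nonneg_left hk (norm_nonneg _)
            _ = 1 + ‖x - a‖ * M := by rw [mul_add, mul_inv_cancel₀ h0.ne']
        calc ‖x - a‖^2 * ‖gradLogPlus a w x‖^2
            = (‖x - a‖ * ‖gradLogPlus a w x‖)^2 := (mul_pow _ _ _).symm
          _ ≤ (1 + ‖x - a‖ * M)^2 := pow_le_pow_left₀ (by positivity) h2 2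
          _ ≤ (1+M)^2 := by
              refine pow_le_pow_left₀ (by positivity) ?_ 2
              nlinarith [norm_nonneg (x - a)]
    have hint : IntegrableOn (fun _ : EuclideanSpace ℝ (Fin 2) => (1+M)^2)
        (Metric.ball a s) := integrableOn_const measure_ball_lt_top.ne
    have h1 : (∫ x in Metric.ball a s, ‖x - a‖^2 * ‖gradLogPlus a w x‖^2)
        ≤ ∫ _x in Metric.ball a s, (1+M)^2 :=
      integral_mono_of_nonneg (ae_of_all _ fun x => by positivity) hint
        ((ae_restrict_iff' measurableSet_ball).2 (ae_of_all _ hK))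
    rw [setIntegral_const, smul_eq_mul, show volume.real (Metric.ball a s) = Real.pi * s ^ 2 from vol2_ball a s hs0.le, hsb] at h1
    calc (∫ x in Metric.ball a s, ‖x - a‖^2 * ‖gradLogPlus a w x‖^2)
        ≤ Real.pi * b * (1+M)^2 := h1
      _ ≤ C * b := by
          nlinarith [mul_nonneg (mul_nonneg hπ.le hlog2) hb0.le,
            mul_nonneg (mul_nonneg hπ.le hM) hb0.le,
            mul_nonneg (mul_nonneg hπ.le (sq_nonneg M)) hb0.le, hb0.le]
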